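/- A square matrix M with entries in a field is uniquely determined by its reflected initial minors, provided all these minors are nonzero: if two k × k matrices have all reflected initial minors nonzero and equal, then the matrices are equal. -/

import Mathlib

/-!
Recover the entries of `A` one at a time, rows from the bottom up and each row from left to
right. For the entry `(i, j)` take the largest solid block whose top-right corner is `(i, j)`;
it reaches the last row or the first column, so its determinant is a reflected initial minor.
All its other entries lie further down or further left, hence are already known to agree with
those of `B`. Expanding along the top row, the two determinants differ by
`± (A i j - B i j)` times the complementary minor, itself a reflected initial minor of `B` (or
empty), hence nonzero; so `A i j = B i j`.
-/

/-- The solid minor of a `k × k` matrix of size `s` whose rows are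
`a, a+1, …, a+s-1` and whose columns are `b, b+1, …, b+s-1` (`0`-indexed). -/
def solidMinor {F : Type*} [Field F] {k : ℕ} (M : Matrix (Fin k) (Fin k) F)
    (s a b : ℕ) (ha : a + s ≤ k) (hb : b + s ≤ k) : F :=
  (M.submatrix (fun t : Fin s => (⟨a + t.val, by omega⟩ : Fin k))
               (fun t : Fin s => (⟨b + t.val, by omega⟩ : Fin k))).det

namespace Matrix

variable {R : Type*} [CommRing R] {n : ℕ}

theorem det_sub_det_of_eq_off (M N : Matrix (Fin (n + 1)) (Fin (n + 1)) R) (i j : Fin (n + 1))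
    (h : ∀ i' j', (i', j') ≠ (i, j) → M i' j' = N i' j') :
    M.det - N.det =
      (-1) ^ (i + j : ℕ) * (M i j - N i j) * (N.submatrix i.succAbove j.succAbove).det := by
  have hminor (j' : Fin (n + 1)) :
      M.submatrix i.succAbove j'.succAbove = N.submatrix i.succAbove j'.succAbove := by
    ext t u
    exact h _ _ (by simp [Fin.succAbove_ne])
  rw [det_succ_row M i, det_succ_row N i, ← Finset.sum_sub_distrib, Finset.sum_eq_single j]
  · rw [hminor]
    ring
  · intro j' _ hj'
    rw [hminor, h i j' (by simp [hj'])]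
    ring
  · simp

theorem apply_eq_of_det_eq_of_eq_off [NoZeroDivisors R]
    (M N : Matrix (Fin (n + 1)) (Fin (n + 1)) R) (i j : Fin (n + 1))
    (h : ∀ i' j', (i', j') ≠ (i, j) → M i' j' = N i' j')
    (hdet : M.det = N.det) (hminor : (N.submatrix i.succAbove j.succAbove).det ≠ 0) :
    M i j = N i j := by
  have hdiff := det_sub_det_of_eq_off M N i j h
  rw [hdet, sub_self, eq_comm, mul_assoc, (isUnit_neg_one.pow _).mul_right_eq_zero,
    mul_eq_zero] at hdiff
  exact sub_eq_zero.mp (hdiff.resolve_right hminor)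

end Matrix

def solidBlock {R : Type*} {k : ℕ} (M : Matrix (Fin k) (Fin k) R) (s a b : ℕ) (ha : a + s ≤ k)
    (hb : b + s ≤ k) : Matrix (Fin s) (Fin s) R :=
  M.submatrix (fun t => ⟨a + t, by omega⟩) (fun t => ⟨b + t, by omega⟩)

theorem solidBlock_submatrix_succ_castSucc {R : Type*} {k : ℕ} (M : Matrix (Fin k) (Fin k) R)
    (n a b : ℕ) (ha : a + (n + 1) ≤ k) (hb : b + (n + 1) ≤ k) :
    (solidBlock M (n + 1) a b ha hb).submatrix Fin.succ Fin.castSucc =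
      solidBlock M n (a + 1) b (by omega) (by omega) := by
  ext t u
  simp only [solidBlock, Matrix.submatrix_apply, Fin.val_succ, Fin.val_castSucc]
  congr 2
  omega

theorem apply_eq_of_reflectedInitialMinors_eq {F : Type*} [Field F] {k : ℕ}
    (A B : Matrix (Fin k) (Fin k) F)
    (hB : ∀ (s a b : ℕ) (ha : a + s ≤ k) (hb : b + s ≤ k),
      1 ≤ s → (a + s = k ∨ b = 0) → solidMinor B s a b ha hb ≠ 0)
    (hAB : ∀ (s a b : ℕ) (ha : a + s ≤ k) (hb : b + s ≤ k),
      1 ≤ s → (a + s = k ∨ b = 0) →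
      solidMinor A s a b ha hb = solidMinor B s a b ha hb)
    (i j : Fin k) (hearlier : ∀ i' j', i < i' ∨ (i' = i ∧ j' < j) → A i' j' = B i' j') :
    A i j = B i j := by
  set n := min (k - 1 - i) j
  have ha : i + (n + 1) ≤ k := by omega
  have hb : j - n + (n + 1) ≤ k := by omega
  have hcorner := Matrix.apply_eq_of_det_eq_of_eq_off (solidBlock A (n + 1) i (j - n) ha hb)
    (solidBlock B (n + 1) i (j - n) ha hb) 0 (Fin.last n) ?off
    (hAB (n + 1) i (j - n) ha hb (by omega) (by omega)) ?minor
  · have corner (M : Matrix (Fin k) (Fin k) F) :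
        solidBlock M (n + 1) i (j - n) ha hb 0 (Fin.last n) = M i j := by
      simp only [solidBlock, Matrix.submatrix_apply]
      congr 1
      ext
      simp only [Fin.val_last]
      omega
    rwa [corner, corner] at hcorner
  case off =>
    intro t u htu
    simp only [ne_eq, Prod.mk.injEq, Fin.ext_iff, Fin.val_zero, Fin.val_last] at htu
    apply hearlier
    simp only [Fin.lt_def, Fin.ext_iff]
    omega
  case minor =>
    rw [Fin.succAbove_zero, Fin.succAbove_last, solidBlock_submatrix_succ_castSucc]
    rcases Nat.eq_zero_or_pos n with hn | hn
    · have : IsEmpty (Fin n) := by rw [hn]; infer_instance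
      rw [Matrix.det_isEmpty]
      exact one_ne_zero
    · exact hB n (i + 1) (j - n) (by omega) (by omega) hn (by omega)

theorem matrix_eq_of_reflectedInitialMinors_eq_general {F : Type*} [Field F] {k : ℕ}
    (A B : Matrix (Fin k) (Fin k) F)
    (hB : ∀ (s a b : ℕ) (ha : a + s ≤ k) (hb : b + s ≤ k),
      1 ≤ s → (a + s = k ∨ b = 0) → solidMinor B s a b ha hb ≠ 0)
    (hAB : ∀ (s a b : ℕ) (ha : a + s ≤ k) (hb : b + s ≤ k),
      1 ≤ s → (a + s = k ∨ b = 0) →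
      solidMinor A s a b ha hb = solidMinor B s a b ha hb) :
    A = B := by
  have hentry : ∀ p : Fin k × Fin k, A p.1 p.2 = B p.1 p.2 := fun p =>
    (wellFounded_gt.prod_lex wellFounded_lt).induction p fun p ih =>
      apply_eq_of_reflectedInitialMinors_eq A B hB hAB p.1 p.2 fun i' j' hlt =>
        ih (i', j') (Prod.lex_def.mpr hlt)
  exact Matrix.ext fun i j => hentry (i, j)

/-- A square matrix over a field is uniquely determined by its reflected initial
minors (solid minors containing the last row or the first column), provided all
of these minors are nonzero: if two `k × k` matrices have all reflected initial
minors nonzero and equal, then the matrices are equal.  A solid minor with rows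
`a, …, a+s-1` contains the last row iff `a + s = k`, and contains the first
column iff `b = 0`. -/
theorem matrix_eq_of_reflectedInitialMinors_eq {F : Type*} [Field F] {k : ℕ}
    (A B : Matrix (Fin k) (Fin k) F)
    (hA : ∀ (s a b : ℕ) (ha : a + s ≤ k) (hb : b + s ≤ k),
      1 ≤ s → (a + s = k ∨ b = 0) → solidMinor A s a b ha hb ≠ 0)
    (hB : ∀ (s a b : ℕ) (ha : a + s ≤ k) (hb : b + s ≤ k),
      1 ≤ s → (a + s = k ∨ b = 0) → solidMinor B s a b ha hb ≠ 0)
    (hAB : ∀ (s a b : ℕ) (ha : a + s ≤ k) (hb : b + s ≤ k),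
      1 ≤ s → (a + s = k ∨ b = 0) →
      solidMinor A s a b ha hb = solidMinor B s a b ha hb) :
    A = B :=
  matrix_eq_of_reflectedInitialMinors_eq_general A B hB hAB
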